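/- Let $(a_{i,j})$, $i\in\{1,\dots,L\}$, $j\in\{1,\dots,N\}$ (with $a_{i,0}:=a_{i,N}$), be i.i.d. Bernoulli($p$) random variables, $0<p<1$, $N\ge 2$. Fix $\ell$ and $n$, and define $S_{\ell,n} := \sum_{j\neq n} \sum_{i=1}^L a_{\ell,j}\, a_{i,n-1}\,(a_{i,j-1}-p)$. Then for all real $t$, $\operatorname{E}[e^{t S_{\ell,n}}] \le e^{\frac{t^2}{8} L (N-1)}$. -/

import Mathlib

/-!
Order the columns `j ≠ n` as `n - 1, n - 2, …, n - (N - 1)`. The summand of `S_{ℓ,n}` for column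
`j` only involves the columns `n - 1`, `j` and `j - 1`, and `j - 1` is the one column in this
list that no earlier summand has seen. So `S_{ℓ,n}` is a sum of `N - 1` martingale increments,
each of which, given the earlier columns, is a sum of `L` independent centred Bernoulli variables
with coefficients in `{0, 1}`. Hoeffding's lemma bounds each conditional moment generating
function by `e^{t²/8 · L}`, and the columns are integrated out one at a time, last one first.
Everything is computed on the finitely many `{0, 1}`-configurations.
-/

open MeasureTheory Real

noncomputable def berMeasure (p : ℝ) : Measure ℝ :=
  ENNReal.ofReal p • Measure.dirac 1 + ENNReal.ofReal (1 - p) • Measure.dirac 0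

open Finset Function ProbabilityTheory

section PiExpect

variable {ι α : Type*} [Fintype ι] [DecidableEq ι] [Fintype α]

noncomputable def piExpect (w : α → ℝ) (f : (ι → α) → ℝ) : ℝ :=
  ∑ s, (∏ q, w (s q)) * f s

variable {w : α → ℝ}

lemma piExpect_mono (hw : ∀ a, 0 ≤ w a) {f g : (ι → α) → ℝ} (hfg : ∀ s, f s ≤ g s) :
    piExpect w f ≤ piExpect w g :=
  sum_le_sum fun s _ => mul_le_mul_of_nonneg_left (hfg s) (prod_nonneg fun _ _ => hw _)

lemma piExpect_mul_const (f : (ι → α) → ℝ) (c : ℝ) :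
    piExpect w (fun s => f s * c) = piExpect w f * c := by
  simp only [piExpect, sum_mul, mul_assoc]

lemma sum_pi_prod_eq_one (hw : ∑ a, w a = 1) : ∑ s : ι → α, ∏ q, w (s q) = 1 := by
  simp [← Fintype.prod_sum, hw]

lemma piExpect_prod (g : ι → α → ℝ) :
    piExpect w (fun s => ∏ q, g q (s q)) = ∏ q, ∑ a, w a * g q a := by
  simp only [piExpect, ← prod_mul_distrib, Fintype.prod_sum]

lemma piExpect_sum_update (hw : ∑ a, w a = 1) (q : ι) (f : (ι → α) → ℝ) :
    piExpect w (fun s => ∑ a, w a * f (update s q a)) = piExpect w f := by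
  have weight_swap : ∀ s a, (∏ r, w (s r)) * w a = (∏ r, w (update s q a r)) * w (s q) := by
    intro s a
    rw [← mul_prod_erase univ _ (mem_univ q), ← mul_prod_erase univ _ (mem_univ q),
      update_self, prod_congr rfl fun r hr => congrArg w (update_of_ne (ne_of_mem_erase hr) a s)]
    ring
  -- `(s, a) ↦ (update s q a, s q)` is an involution exchanging the two weightings
  let e : Equiv.Perm ((ι → α) × α) := Involutive.toPerm (fun x => (update x.1 q x.2, x.1 q))
    fun x => by simp
  calc piExpect w (fun s => ∑ a, w a * f (update s q a))
      = ∑ x : (ι → α) × α, (∏ r, w (x.1 r)) * w x.2 * f (update x.1 q x.2) := by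
        simp only [piExpect, Fintype.sum_prod_type, mul_sum, mul_assoc]
    _ = ∑ x : (ι → α) × α, (∏ r, w ((e x).1 r)) * w (e x).2 * f (e x).1 := by
        refine sum_congr rfl fun x _ => ?_
        rw [weight_swap]
        rfl
    _ = ∑ x : (ι → α) × α, (∏ r, w (x.1 r)) * w x.2 * f x.1 :=
        Equiv.sum_comp e fun x : (ι → α) × α => (∏ r, w (x.1 r)) * w x.2 * f x.1
    _ = piExpect w f := by
        simp only [piExpect, Fintype.sum_prod_type, mul_right_comm _ (w _), ← mul_sum,
          hw, mul_one]

/-- Azuma–Hoeffding for product weights: `c m` is the coordinate revealed by the increment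
`F m`. -/
theorem piExpect_exp_sum_le (hw0 : ∀ a, 0 ≤ w a) (hw1 : ∑ a, w a = 1) (c : ℕ → ι)
    (F : ℕ → (ι → α) → ℝ) (K : ℝ) (M : ℕ)
    (hF : ∀ k m, k < m → m < M → ∀ s a, F k (update s (c m) a) = F k s)
    (hK : ∀ m < M, ∀ s, ∑ a, w a * exp (F m (update s (c m) a)) ≤ K) :
    piExpect w (fun s => exp (∑ m ∈ range M, F m s)) ≤ K ^ M := by
  induction M with
  | zero => simp [piExpect, sum_pi_prod_eq_one hw1]
  | succ M ih =>
    obtain ⟨a₀, -, -⟩ := exists_ne_zero_of_sum_ne_zero (hw1.trans_ne one_ne_zero)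
    have hK0 : 0 ≤ K := (sum_nonneg fun a _ => mul_nonneg (hw0 a) (exp_pos _).le).trans
      (hK M M.lt_succ_self fun _ => a₀)
    have step : ∀ s, ∑ a, w a * exp (∑ m ∈ range (M + 1), F m (update s (c M) a))
        = exp (∑ m ∈ range M, F m s) * ∑ a, w a * exp (F M (update s (c M) a)) := by
      intro s
      rw [mul_sum]
      refine sum_congr rfl fun a _ => ?_
      rw [sum_range_succ, exp_add,
        sum_congr rfl fun k hk => hF k M (mem_range.mp hk) M.lt_succ_self s a]
      ring
    calc piExpect w (fun s => exp (∑ m ∈ range (M + 1), F m s))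
        = piExpect w (fun s => exp (∑ m ∈ range M, F m s) *
            ∑ a, w a * exp (F M (update s (c M) a))) := by
          rw [← piExpect_sum_update hw1 (c M)]
          simp only [step]
      _ ≤ piExpect w (fun s => exp (∑ m ∈ range M, F m s) * K) :=
          piExpect_mono hw0 fun s =>
            mul_le_mul_of_nonneg_left (hK M M.lt_succ_self s) (exp_pos _).le
      _ ≤ K ^ M * K := by
          rw [piExpect_mul_const]
          exact mul_le_mul_of_nonneg_right
            (ih (fun k m hkm hm => hF k m hkm (hm.trans M.lt_succ_self))
              fun m hm => hK m (hm.trans M.lt_succ_self)) hK0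
      _ = K ^ (M + 1) := (pow_succ K M).symm

end PiExpect

noncomputable def bernoulliBool (p : ℝ) : Measure Bool :=
  ENNReal.ofReal p • Measure.dirac true + ENNReal.ofReal (1 - p) • Measure.dirac false

def bernoulliWeight (p : ℝ) (b : Bool) : ℝ := cond b p (1 - p)

section Bernoulli

variable {p : ℝ}

instance : IsFiniteMeasure (bernoulliBool p) :=
  ⟨by simp [bernoulliBool]⟩

instance : IsFiniteMeasure (berMeasure p) :=
  ⟨by simp [berMeasure]⟩

lemma bernoulliBool_map :
    (bernoulliBool p).map (fun b : Bool => (b.toNat : ℝ)) = berMeasure p := by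
  simp [bernoulliBool, berMeasure, Measure.map_add _ _ (measurable_of_countable _),
    Measure.map_smul, Measure.map_dirac' (measurable_of_countable _)]

lemma bernoulliWeight_nonneg (hp0 : 0 ≤ p) (hp1 : p ≤ 1) (b : Bool) :
    0 ≤ bernoulliWeight p b := by
  cases b <;> simp [bernoulliWeight] <;> linarith

lemma sum_bernoulliWeight : ∑ b, bernoulliWeight p b = 1 := by
  simp [bernoulliWeight]

lemma bernoulliBool_real_singleton (hp0 : 0 ≤ p) (hp1 : p ≤ 1) (b : Bool) :
    (bernoulliBool p).real {b} = bernoulliWeight p b := by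
  cases b <;> simp [bernoulliBool, bernoulliWeight, measureReal_def, hp0, hp1]

lemma isProbabilityMeasure_bernoulliBool (hp0 : 0 ≤ p) (hp1 : p ≤ 1) :
    IsProbabilityMeasure (bernoulliBool p) := by
  constructor
  simp [bernoulliBool, ← ENNReal.ofReal_add hp0 (sub_nonneg.mpr hp1)]

lemma integral_bernoulliBool (hp0 : 0 ≤ p) (hp1 : p ≤ 1) (f : Bool → ℝ) :
    ∫ b, f b ∂bernoulliBool p = ∑ b, bernoulliWeight p b * f b := by
  rw [integral_fintype Integrable.of_finite]
  simp only [bernoulliBool_real_singleton hp0 hp1, smul_eq_mul]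

lemma sum_bernoulliWeight_mul_exp_le (hp0 : 0 ≤ p) (hp1 : p ≤ 1) (t : ℝ) :
    ∑ b, bernoulliWeight p b * exp (t * ((b.toNat : ℝ) - p)) ≤ exp (t ^ 2 / 8) := by
  have := isProbabilityMeasure_bernoulliBool hp0 hp1
  have hoeffding := (hasSubgaussianMGF_of_mem_Icc_of_integral_eq_zero (a := -p) (b := 1 - p)
    (measurable_of_countable (fun b : Bool => (b.toNat : ℝ) - p)).aemeasurable
    (ae_of_all _ fun b => by cases b <;> simp)
    (by rw [integral_bernoulliBool hp0 hp1]; simp [bernoulliWeight]; ring)).mgf_le t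
  rw [mgf, integral_bernoulliBool hp0 hp1] at hoeffding
  convert hoeffding using 2
  norm_num
  ring

lemma piExpect_bernoulliWeight_exp_le {κ : Type*} [Fintype κ] [DecidableEq κ] (hp0 : 0 ≤ p)
    (hp1 : p ≤ 1) (t : ℝ) (c : κ → ℝ) (hc : ∀ k, |c k| ≤ 1) :
    piExpect (bernoulliWeight p) (fun a => exp (t * ∑ k, c k * ((a k).toNat - p)))
      ≤ exp (t ^ 2 / 8) ^ Fintype.card κ := by
  simp only [mul_sum, exp_sum]
  rw [piExpect_prod (fun k (b : Bool) => exp (t * (c k * ((b.toNat : ℝ) - p)))), ← card_univ,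
    ← prod_const]
  refine prod_le_prod (fun k _ => sum_nonneg fun b _ =>
    mul_nonneg (bernoulliWeight_nonneg hp0 hp1 b) (exp_pos _).le) fun k _ => ?_
  calc ∑ b, bernoulliWeight p b * exp (t * (c k * ((b.toNat : ℝ) - p)))
      = ∑ b, bernoulliWeight p b * exp (t * c k * ((b.toNat : ℝ) - p)) := by
        simp only [mul_assoc]
    _ ≤ exp ((t * c k) ^ 2 / 8) := sum_bernoulliWeight_mul_exp_le hp0 hp1 _
    _ ≤ exp (t ^ 2 / 8) := by
        have hc2 : c k ^ 2 ≤ 1 := (sq_le_one_iff_abs_le_one _).mpr (hc k)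
        rw [mul_pow]
        gcongr
        exact mul_le_of_le_one_right (sq_nonneg t) hc2

lemma integral_pi_berMeasure {ι : Type*} [Fintype ι] [DecidableEq ι] (hp0 : 0 ≤ p) (hp1 : p ≤ 1)
    {f : (ι → ℝ) → ℝ} (hf : Measurable f) :
    ∫ ω, f ω ∂(Measure.pi fun _ : ι => berMeasure p)
      = piExpect (bernoulliWeight p) (fun s => f fun q => ((s q).toNat : ℝ)) := by
  have := isProbabilityMeasure_bernoulliBool hp0 hp1
  have hmap : MeasurePreserving (fun (s : ι → Bool) q => ((s q).toNat : ℝ))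
      (Measure.pi fun _ => bernoulliBool p) (Measure.pi fun _ => berMeasure p) :=
    measurePreserving_pi _ _ fun _ => ⟨measurable_of_countable _, bernoulliBool_map⟩
  rw [← hmap.map_eq, integral_map hmap.measurable.aemeasurable hf.aestronglyMeasurable,
    integral_fintype Integrable.of_finite]
  refine sum_congr rfl fun s _ => ?_
  rw [measureReal_def, Measure.pi_singleton, ENNReal.toReal_prod, smul_eq_mul]
  simp only [← measureReal_def, bernoulliBool_real_singleton hp0 hp1]

end Bernoulli

lemma piExpect_curry {κ ι α : Type*} [Fintype κ] [DecidableEq κ] [Fintype ι] [DecidableEq ι]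
    [Fintype α] (w : α → ℝ) (f : (κ × ι → α) → ℝ) :
    piExpect w f = piExpect (fun a : κ → α => ∏ k, w (a k))
      (fun s : ι → κ → α => f fun q => s q.2 q.1) := by
  let e : (ι → κ → α) ≃ (κ × ι → α) :=
    { toFun := fun s q => s q.2 q.1, invFun := fun s j k => s (k, j),
      left_inv := fun _ => rfl, right_inv := fun _ => rfl }
  rw [piExpect, piExpect, ← e.sum_comp]
  simp only [Fintype.prod_prod_type_right]
  rfl

open Fin.NatCast in
lemma Fin.sub_natCast_ne_sub_natCast {N : ℕ} [NeZero N] (n : Fin N) {a b : ℕ} (ha : a < N)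
    (hb : b < N) (hab : a ≠ b) : n - (a : Fin N) ≠ n - b := fun h =>
  hab (by rw [← Fin.val_cast_of_lt ha, sub_right_injective h, Fin.val_cast_of_lt hb])

open Fin.NatCast in
lemma Fin.sum_erase_eq_sum_range_sub {N : ℕ} [NeZero N] {M : Type*} [AddCancelCommMonoid M]
    (n : Fin N) (f : Fin N → M) :
    ∑ j ∈ univ.erase n, f j = ∑ m ∈ range (N - 1), f (n - 1 - m) := by
  have hlast : ((N - 1 : ℕ) : Fin N) = -1 := by
    rw [eq_neg_iff_add_eq_zero, ← Nat.cast_add_one, Nat.sub_add_cancel NeZero.one_le,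
      Fin.natCast_self]
  have hfull : ∑ m ∈ range (N - 1 + 1), f (n - 1 - m) = ∑ j, f j := by
    rw [Nat.sub_add_cancel NeZero.one_le, ← Fin.sum_univ_eq_sum_range (fun m => f (n - 1 - m))]
    simp only [Fin.cast_val_eq_self]
    exact Equiv.sum_comp (Equiv.subLeft (n - 1)) f
  rw [sum_range_succ, hlast, sub_neg_eq_add, sub_add_cancel, ← add_sum_erase _ _ (mem_univ n),
    add_comm] at hfull
  exact add_left_cancel hfull.symm

section Interference

open Fin.NatCast

variable {L N : ℕ} [NeZero N]

/-- The summand of `S_{ℓ,n}` for column `j = n - 1 - m`, on a configuration `s` stored column by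
column: `s j i` is the entry `a_{i,j}`. -/
noncomputable def interferenceIncrement (p : ℝ) (ℓ : Fin L) (n : Fin N) (m : ℕ)
    (s : Fin N → Fin L → Bool) : ℝ :=
  ∑ i, ((s (n - 1 - m) ℓ).toNat : ℝ) * (s (n - 1) i).toNat *
    ((s (n - 1 - ((m + 1 : ℕ) : Fin N)) i).toNat - p)

lemma sum_erase_eq_sum_interferenceIncrement (p : ℝ) (ℓ : Fin L) (n : Fin N)
    (s : Fin N → Fin L → Bool) :
    ∑ j ∈ univ.erase n,
        ∑ i, ((s j ℓ).toNat : ℝ) * (s (n - 1) i).toNat * ((s (j - 1) i).toNat - p)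
      = ∑ m ∈ range (N - 1), interferenceIncrement p ℓ n m s := by
  rw [Fin.sum_erase_eq_sum_range_sub]
  simp only [interferenceIncrement, Nat.cast_add, Nat.cast_one, sub_sub, add_assoc]

lemma interferenceIncrement_update_of_lt (p : ℝ) (ℓ : Fin L) (n : Fin N) {k m : ℕ}
    (hkm : k < m) (hm : m < N - 1) (s : Fin N → Fin L → Bool) (a : Fin L → Bool) :
    interferenceIncrement p ℓ n k (update s (n - 1 - ((m + 1 : ℕ) : Fin N)) a)
      = interferenceIncrement p ℓ n k s := by
  have hne : ∀ r ≤ k + 1, n - 1 - (r : Fin N) ≠ n - 1 - ((m + 1 : ℕ) : Fin N) := fun r hr =>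
    Fin.sub_natCast_ne_sub_natCast _ (by omega) (by omega) (by omega)
  have hn1 := hne 0 (Nat.zero_le _)
  rw [Nat.cast_zero, sub_zero] at hn1
  simp only [interferenceIncrement, update_of_ne hn1, update_of_ne (hne k k.le_succ),
    update_of_ne (hne (k + 1) le_rfl)]

lemma interferenceIncrement_mgf_le {p : ℝ} (hp0 : 0 ≤ p) (hp1 : p ≤ 1) (ℓ : Fin L) (n : Fin N)
    {m : ℕ} (hm : m < N - 1) (t : ℝ) (s : Fin N → Fin L → Bool) :
    ∑ a : Fin L → Bool, (∏ i, bernoulliWeight p (a i)) *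
        exp (t * interferenceIncrement p ℓ n m (update s (n - 1 - ((m + 1 : ℕ) : Fin N)) a))
      ≤ exp (t ^ 2 / 8) ^ L := by
  have hne : ∀ r ≤ m, n - 1 - (r : Fin N) ≠ n - 1 - ((m + 1 : ℕ) : Fin N) := fun r hr =>
    Fin.sub_natCast_ne_sub_natCast _ (by omega) (by omega) (by omega)
  have hn1 := hne 0 (Nat.zero_le _)
  rw [Nat.cast_zero, sub_zero] at hn1
  have hbool : ∀ b : Bool, (0 : ℝ) ≤ b.toNat ∧ (b.toNat : ℝ) ≤ 1 := fun b =>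
    ⟨Nat.cast_nonneg _, Nat.cast_le_one.mpr (Bool.toNat_le b)⟩
  simp only [interferenceIncrement, update_self, update_of_ne hn1, update_of_ne (hne m le_rfl)]
  refine (piExpect_bernoulliWeight_exp_le hp0 hp1 t _ fun i => ?_).trans_eq
    (by rw [Fintype.card_fin])
  rw [abs_of_nonneg (mul_nonneg (hbool _).1 (hbool _).1)]
  exact mul_le_one₀ (hbool _).2 (hbool _).1 (hbool _).2

end Interference

theorem interference_mgf_bound_general (L N : ℕ) [NeZero N]
    (p : ℝ) (hp : 0 < p) (hp1 : p < 1) (ℓ : Fin L) (n : Fin N) (t : ℝ) :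
    ∫ ω : Fin L × Fin N → ℝ,
        Real.exp (t * ∑ j ∈ Finset.univ.erase n, ∑ i : Fin L,
          ω (ℓ, j) * ω (i, n - 1) * (ω (i, j - 1) - p))
      ∂(Measure.pi fun _ : Fin L × Fin N => berMeasure p)
      ≤ Real.exp (t ^ 2 / 8 * L * (N - 1)) := by
  rw [integral_pi_berMeasure hp.le hp1.le (by fun_prop), piExpect_curry]
  simp only [sum_erase_eq_sum_interferenceIncrement]
  calc piExpect (fun a : Fin L → Bool => ∏ i, bernoulliWeight p (a i))
        (fun s => exp (t * ∑ m ∈ range (N - 1), interferenceIncrement p ℓ n m s))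
      ≤ (exp (t ^ 2 / 8) ^ L) ^ (N - 1) := by
        simp only [mul_sum]
        exact piExpect_exp_sum_le
          (fun a => prod_nonneg fun i _ => bernoulliWeight_nonneg hp.le hp1.le (a i))
          (sum_pi_prod_eq_one sum_bernoulliWeight) _ _ _ _
          (fun k m hkm hm s a => by rw [interferenceIncrement_update_of_lt p ℓ n hkm hm])
          fun m hm s => by
            simpa only [mul_sum] using interferenceIncrement_mgf_le hp.le hp1.le ℓ n hm t s
    _ = exp (t ^ 2 / 8 * L * (N - 1)) := by
        rw [← exp_nat_mul, ← exp_nat_mul, Nat.cast_sub NeZero.one_le]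
        push_cast
        ring_nf

/-- With i.i.d. Bernoulli(p) entries (column index cyclic in `Fin N`), the moment
generating function of `S_{ℓ,n} = ∑_{j≠n} ∑_i a_{ℓ,j} a_{i,n-1}(a_{i,j-1}-p)` satisfies
`E[e^{t S}] ≤ e^{t²/8 · L(N-1)}`. -/
theorem interference_mgf_bound (L N : ℕ) [NeZero N] (hN : 2 ≤ N)
    (p : ℝ) (hp : 0 < p) (hp1 : p < 1) (ℓ : Fin L) (n : Fin N) (t : ℝ) :
    ∫ ω : Fin L × Fin N → ℝ,
        Real.exp (t * ∑ j ∈ Finset.univ.erase n, ∑ i : Fin L,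
          ω (ℓ, j) * ω (i, n - 1) * (ω (i, j - 1) - p))
      ∂(Measure.pi fun _ : Fin L × Fin N => berMeasure p)
      ≤ Real.exp (t ^ 2 / 8 * L * (N - 1)) :=
  interference_mgf_bound_general L N p hp hp1 ℓ n t
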